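/- Let u(t) be a harmonic map flow on a surface with stress-energy bound ‖S(u(t))‖_{L^q} ≤ σ (q ≥ 1) for τ ≤ t < T. Suppose 0 < R ≤ ρ < R₀ and τ ≤ t₁ ≤ t₂ < T satisfy sup_{t₁≤t≤t₂} E(u(t), B_ρ(p)) ≤ E(u(t₂), B_R(p)) + ε/2. Then for t₁ ≤ t ≤ t₂ the outer energy scale satisfies λ_{ε,ρ,p}(u(t)) ≤ max[4R, (Cσ(t₂−t)/ε)^{q/2}]. -/

import Mathlib

/-!
Above `M = max (4R, (8cσ(t₂-t)/ε)^{q/2})` every annulus carries energy less than `ε`.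
For `M < r < ρ`, the ball `B_r` at time `t` has energy at most `E(u(t₂), B_R) + ε/2`, while
running Lemma 4.1 from `t` to `t₂` on `B_{r/2}` shows that `B_{r/2}` at time `t` has lost at
most `cσ(t₂-t)(r/2)^{-2/q} < ε/2` of the energy that `B_{r/4} ⊇ B_R` carries at time `t₂`.
-/

open Set

/-- The outer energy scale of a radial energy profile `E r = E(u, B_r(p))`. -/
noncomputable def outerEnergyScale (E : ℝ → ℝ) (ε ρ : ℝ) : ℝ :=
  sInf {l : ℝ | l ∈ Icc 0 ρ ∧ ∀ r : ℝ, l < r → r < ρ → E r - E (r / 2) < ε}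

lemma outerEnergyScale_le {E : ℝ → ℝ} {ε ρ M : ℝ} (hρ : 0 ≤ ρ) (hM : 0 ≤ M)
    (h : ∀ r, M < r → r < ρ → E r - E (r / 2) < ε) : outerEnergyScale E ε ρ ≤ M := by
  have hbdd : BddBelow {l : ℝ | l ∈ Icc 0 ρ ∧ ∀ r : ℝ, l < r → r < ρ → E r - E (r / 2) < ε} :=
    ⟨0, fun _ hl => hl.1.1⟩
  rcases le_or_gt ρ M with hρM | hMρ
  · exact (csInf_le hbdd ⟨⟨hρ, le_rfl⟩, fun r hr hr' => absurd (hr.trans hr') (lt_irrefl ρ)⟩).trans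
      hρM
  · exact csInf_le hbdd ⟨⟨hM, hMρ.le⟩, h⟩

lemma two_mul_rpow_le_rpow_four_mul {x q : ℝ} (hx : 0 ≤ x) (hq : 1 ≤ q) :
    2 * x ^ (q / 2) ≤ (4 * x) ^ (q / 2) := by
  have h4 : (4 : ℝ) ^ (q / 2) = 2 ^ q := by
    rw [show (4 : ℝ) = 2 ^ (2 : ℝ) by norm_num, ← Real.rpow_mul (by norm_num)]
    ring_nf
  have h2 : (2 : ℝ) ≤ 2 ^ q := by
    simpa using Real.rpow_le_rpow_of_exponent_le (by norm_num : (1 : ℝ) ≤ 2) hq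
  rw [Real.mul_rpow (by norm_num) hx, h4]
  exact mul_le_mul_of_nonneg_right h2 (Real.rpow_nonneg hx _)

lemma mul_rpow_neg_lt_half {A ε q s : ℝ} (hA : 0 ≤ A) (hε : 0 < ε) (hq : 0 < q)
    (hs : (2 * A / ε) ^ (q / 2) < s) : A * s ^ (-(2 / q)) < ε / 2 := by
  have hs0 : 0 < s := (Real.rpow_nonneg (by positivity) _).trans_lt hs
  have hlt : 2 * A / ε < s ^ (2 / q) :=
    (Real.rpow_inv_lt_iff_of_pos (by positivity) hs0.le (by positivity)).mp (by simpa using hs)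
  rw [Real.rpow_neg hs0.le, ← div_eq_mul_inv, div_lt_iff₀ (by positivity)]
  rw [div_lt_iff₀ hε] at hlt
  linarith

theorem stmt11 (q c : ℝ) (hq : 1 ≤ q) (hc : 0 < c) :
    ∃ C > (0 : ℝ), ∀ (σ ε ρ R τ T t₁ t₂ : ℝ) (Eb : ℝ → ℝ → ℝ),
      0 ≤ σ → 0 < ε → 0 < ρ → 0 < R → R ≤ ρ →
      0 ≤ τ → τ ≤ t₁ → t₁ ≤ t₂ → t₂ < T →
      (∀ t, Monotone (Eb t)) → (∀ t r, 0 ≤ Eb t r) →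
      (∀ R' : ℝ, 0 < R' → ∀ s₁ s₂, τ ≤ s₁ → s₁ ≤ s₂ → s₂ < T →
        Eb s₂ (R' / 2) ≤ Eb s₁ R' + c * σ * (s₂ - s₁) * R' ^ (-(2 / q))) →
      (∀ t ∈ Set.Icc t₁ t₂, Eb t ρ ≤ Eb t₂ R + ε / 2) →
      ∀ t ∈ Set.Icc t₁ t₂,
        sInf {l : ℝ | l ∈ Set.Icc 0 ρ ∧
            ∀ r : ℝ, l < r → r < ρ → Eb t r - Eb t (r / 2) < ε} ≤
          max (4 * R) ((C * σ * (t₂ - t) / ε) ^ (q / 2)) := by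
  refine ⟨8 * c, by positivity, ?_⟩
  intro σ ε ρ R τ T t₁ t₂ Eb hσ hε hρ hR _ _ hτt₁ _ ht₂T hmono _ hgrow hsup t ht
  have hA : 0 ≤ c * σ * (t₂ - t) := mul_nonneg (mul_nonneg hc.le hσ) (sub_nonneg.2 ht.2)
  refine outerEnergyScale_le (E := Eb t) hρ.le (le_max_of_le_left (by positivity)) ?_
  intro r hMr hrρ
  have h4R : 4 * R < r := (le_max_left _ _).trans_lt hMr
  have hgrowth_small : c * σ * (t₂ - t) * (r / 2) ^ (-(2 / q)) < ε / 2 := by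
    refine mul_rpow_neg_lt_half hA hε (by linarith) ?_
    have hscale := two_mul_rpow_le_rpow_four_mul (div_nonneg (mul_nonneg zero_le_two hA) hε.le) hq
    rw [show 4 * (2 * (c * σ * (t₂ - t)) / ε) = 8 * c * σ * (t₂ - t) / ε by ring] at hscale
    linarith [(le_max_right _ _).trans_lt hMr]
  have hgrowth := hgrow (r / 2) (by linarith) t t₂ (hτt₁.trans ht.1) ht.2 ht₂T
  have hR_le : Eb t₂ R ≤ Eb t₂ (r / 2 / 2) := hmono t₂ (by linarith)
  have hρ_ge : Eb t r ≤ Eb t ρ := hmono t hrρ.le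
  linarith [hsup t ht]
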